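/- arXiv:2510.19521 — 2 statements merged into one kernel-verified Lean document; each statement's English description precedes it below -/
import Mathlib

section
/- Define η(d, h) = a(h)·(1 − P_los(d)) + b(h)·P_los(d) where a(h) = 4.32 − 0.76·log₁₀(h), b(h) = 2.225 − 0.05·log₁₀(h), P_los(d) = (1 − d₁/d)·exp(−d/p₁) + d₁/d for d > d₁, with h ∈ [20,120], d₁ > 0, p₁ > 0. Then ∂η/∂d ≥ 0, i.e., η is monotonically nondecreasing in d for d > d₁. -/
/-!
Writing `P_los(d) = 1 - (1 - d₁/d)(1 - exp(-d/p₁))` exhibits the LOS probability as one minus a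
product of two nonnegative nondecreasing functions of `d`, so it is nonincreasing without any
calculus. Since `η = a - (a - b) P_los` and `b(h) ≤ a(h)` on the altitude range, `η` is
nondecreasing.
-/

open Real Set

/- The paper's `a(h)`, `b(h)` and `P_los(d)`. -/
noncomputable def nlosExponent (h : ℝ) : ℝ := 4.32 - 0.76 * logb 10 h

noncomputable def losExponent (h : ℝ) : ℝ := 2.225 - 0.05 * logb 10 h

noncomputable def losProbability (d₁ p₁ d : ℝ) : ℝ := (1 - d₁ / d) * exp (-d / p₁) + d₁ / d

lemma losExponent_le_nlosExponent {h : ℝ} (h₀ : 0 < h) (h₁ : h ≤ 120) :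
    losExponent h ≤ nlosExponent h := by
  -- `b ≤ a` amounts to `logb 10 h ≤ 2095/710`; `logb 10 h ≤ 5/2` is enough and avoids a real power.
  have hlog : logb 10 (h ^ 2) ≤ 5 :=
    (logb_le_iff_le_rpow (by norm_num) (by positivity)).2 (by norm_num; nlinarith)
  rw [logb_pow] at hlog
  unfold losExponent nlosExponent
  push_cast at hlog
  linarith

lemma losProbability_eq (d₁ p₁ d : ℝ) :
    losProbability d₁ p₁ d = 1 - (1 - d₁ / d) * (1 - exp (-d / p₁)) := by
  unfold losProbability
  ring

lemma antitoneOn_losProbability {d₁ p₁ : ℝ} (hd₁ : 0 ≤ d₁) (hp₁ : 0 ≤ p₁) :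
    AntitoneOn (losProbability d₁ p₁) (Ioi d₁) := by
  have hpos : ∀ d ∈ Ioi d₁, 0 < d := fun d hd => hd₁.trans_lt hd
  have hfar : MonotoneOn (fun d => 1 - d₁ / d) (Ioi d₁) := fun x hx y hy hxy =>
    sub_le_sub_left (div_le_div_of_nonneg_left hd₁ (hpos x hx) hxy) 1
  have hfar₀ : ∀ d ∈ Ioi d₁, 0 ≤ 1 - d₁ / d := fun d hd =>
    sub_nonneg.2 ((div_le_one (hpos d hd)).2 (le_of_lt hd))
  have hdecay : MonotoneOn (fun d => 1 - exp (-d / p₁)) (Ioi d₁) := fun x _ y _ hxy =>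
    sub_le_sub_left (exp_le_exp.2 (div_le_div_of_nonneg_right (neg_le_neg hxy) hp₁)) 1
  have hdecay₀ : ∀ d ∈ Ioi d₁, 0 ≤ 1 - exp (-d / p₁) := fun d hd =>
    sub_nonneg.2 <| exp_le_one_iff.2 <|
      div_nonpos_of_nonpos_of_nonneg (neg_nonpos.2 (hpos d hd).le) hp₁
  intro x hx y hy hxy
  simp only [losProbability_eq]
  exact sub_le_sub_left ((hfar.mul hdecay hfar₀ hdecay₀) hx hy hxy) 1

lemma monotoneOn_mix_of_antitoneOn {α : Type*} [Preorder α] {s : Set α} {P : α → ℝ} {a b : ℝ}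
    (hP : AntitoneOn P s) (hba : b ≤ a) : MonotoneOn (fun x => a * (1 - P x) + b * P x) s := by
  intro x hx y hy hxy
  have hPxy := hP hx hy hxy
  nlinarith

theorem eta_monotone_in_distance (h d₁ p₁ : ℝ) (hh1 : 20 ≤ h) (hh2 : h ≤ 120)
    (hd₁ : 0 < d₁) (hp₁ : 0 < p₁) :
    MonotoneOn (fun d : ℝ =>
      (4.32 - 0.76 * Real.logb 10 h) * (1 - ((1 - d₁ / d) * Real.exp (-d / p₁) + d₁ / d))
        + (2.225 - 0.05 * Real.logb 10 h) * ((1 - d₁ / d) * Real.exp (-d / p₁) + d₁ / d))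
      (Set.Ioi d₁) :=
  monotoneOn_mix_of_antitoneOn (antitoneOn_losProbability hd₁.le hp₁.le)
    (losExponent_le_nlosExponent (by linarith) hh2)
end

section
/- Define η(d, h) as the A2 region composite path-loss exponent as above. Then ∂²η/∂d² ≤ 0 for d > d₁, i.e., η is concave in d on (d₁, ∞). -/
/-!
Write `P_los(d) = e^{-d/p₁} + (d₁/p₁) φ(d/p₁)` with `φ(x) = (1 - e^{-x})/x`. Both summands are
convex on `(0, ∞)`: `φ''(x) = (2 - (x² + 2x + 2)e^{-x})/x³ ≥ 0` because `eˣ ≥ 1 + x + x²/2`.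
Since `η = a + (b - a) P_los` and `b(h) ≤ a(h)` (as `log₁₀ h ≤ 5/2` for `h ≤ 120`), `η` is concave.
-/

open Real Set

theorem hasDerivAt_one_sub_exp_neg_div {x : ℝ} (hx : x ≠ 0) :
    HasDerivAt (fun x => (1 - exp (-x)) / x) (((x + 1) * exp (-x) - 1) / x ^ 2) x := by
  refine ((((hasDerivAt_id x).neg).exp.const_sub 1).div (hasDerivAt_id x) hx).congr_deriv ?_
  simp only [id, Pi.neg_apply]
  ring

theorem hasDerivAt_deriv_one_sub_exp_neg_div {x : ℝ} (hx : x ≠ 0) :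
    HasDerivAt (fun x => ((x + 1) * exp (-x) - 1) / x ^ 2)
      ((2 - (x ^ 2 + 2 * x + 2) * exp (-x)) / x ^ 3) x := by
  refine (((((hasDerivAt_id x).add_const 1).mul ((hasDerivAt_id x).neg).exp).sub_const 1).div
    (hasDerivAt_pow 2 x) (pow_ne_zero 2 hx)).congr_deriv ?_
  simp only [id, Pi.neg_apply, Pi.mul_apply]
  field_simp
  ring

theorem convexOn_one_sub_exp_neg_div : ConvexOn ℝ (Ioi 0) (fun x => (1 - exp (-x)) / x) := by
  refine convexOn_of_hasDerivWithinAt2_nonneg (convex_Ioi 0)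
    (f' := fun x => ((x + 1) * exp (-x) - 1) / x ^ 2)
    (f'' := fun x => (2 - (x ^ 2 + 2 * x + 2) * exp (-x)) / x ^ 3)
    (fun x hx => (hasDerivAt_one_sub_exp_neg_div hx.ne').continuousAt.continuousWithinAt)
    ?_ ?_ ?_ <;> rw [interior_Ioi]
  · exact fun x hx => (hasDerivAt_one_sub_exp_neg_div hx.ne').hasDerivWithinAt
  · exact fun x hx => (hasDerivAt_deriv_one_sub_exp_neg_div hx.ne').hasDerivWithinAt
  · intro x (hx : 0 < x)
    have htaylor : (x ^ 2 + 2 * x + 2) * exp (-x) ≤ 2 := by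
      rw [exp_neg, ← div_eq_mul_inv, div_le_iff₀ (exp_pos x)]
      linarith [quadratic_le_exp_of_nonneg hx.le]
    exact div_nonneg (sub_nonneg.2 htaylor) (by positivity)

theorem convexOn_exp_neg : ConvexOn ℝ univ (fun x => exp (-x)) := by
  simpa [Function.comp_def] using convexOn_exp.comp_linearMap (-LinearMap.id)

theorem ConvexOn.comp_div_Ioi {f : ℝ → ℝ} (hf : ConvexOn ℝ (Ioi 0) f) {p : ℝ} (hp : 0 < p) :
    ConvexOn ℝ (Ioi 0) (fun x => f (x / p)) := by
  refine ⟨convex_Ioi 0, fun x hx y hy a b ha hb hab => ?_⟩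
  simpa only [smul_eq_mul, mul_div_assoc, add_div] using
    hf.2 (div_pos hx hp) (div_pos hy hp) ha hb hab

theorem convexOn_losProbability {d₁ p₁ : ℝ} (hd₁ : 0 ≤ d₁) (hp₁ : 0 < p₁) :
    ConvexOn ℝ (Ioi 0) (losProbability d₁ p₁) := by
  have hQ : ConvexOn ℝ (Ioi 0) (fun x => exp (-x) + d₁ / p₁ * ((1 - exp (-x)) / x)) :=
    (convexOn_exp_neg.subset (subset_univ _) (convex_Ioi 0)).add
      (convexOn_one_sub_exp_neg_div.smul (by positivity))
  refine (hQ.comp_div_Ioi hp₁).congr fun d (hd : 0 < d) => ?_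
  simp only [losProbability, neg_div]
  field_simp
  ring

theorem ConvexOn.concaveOn_mul_one_sub_add_mul {E : Type*} [AddCommGroup E] [Module ℝ E]
    {s : Set E} {P : E → ℝ} (hP : ConvexOn ℝ s P) {a b : ℝ} (hba : b ≤ a) :
    ConcaveOn ℝ s (fun x => a * (1 - P x) + b * P x) := by
  refine ((hP.smul (sub_nonneg.2 hba)).neg.add_const a).congr fun x _ => ?_
  simp only [Pi.add_apply, Pi.neg_apply, smul_eq_mul]
  ring

theorem eta_concave_in_distance (h d₁ p₁ : ℝ) (hh1 : 20 ≤ h) (hh2 : h ≤ 120)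
    (hd₁ : 0 < d₁) (hp₁ : 0 < p₁) :
    ConcaveOn ℝ (Set.Ioi d₁) (fun d : ℝ =>
      (4.32 - 0.76 * Real.logb 10 h) * (1 - ((1 - d₁ / d) * Real.exp (-d / p₁) + d₁ / d))
        + (2.225 - 0.05 * Real.logb 10 h) * ((1 - d₁ / d) * Real.exp (-d / p₁) + d₁ / d)) := by
  have hlog : logb 10 h ≤ 5 / 2 := by
    have hsq : logb 10 (h ^ 2) ≤ logb 10 (10 ^ 5) :=
      logb_le_logb_of_le (by norm_num) (by positivity) (by nlinarith)
    rw [logb_pow, logb_pow, logb_self_eq_one (by norm_num)] at hsq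
    push_cast at hsq
    linarith
  exact ((convexOn_losProbability hd₁.le hp₁).subset (Ioi_subset_Ioi hd₁.le)
    (convex_Ioi d₁)).concaveOn_mul_one_sub_add_mul (by linarith)
end
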